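/- arXiv:1608.01929 — 5 statements merged into one kernel-verified Lean document; each statement's English description precedes it below -/
import Mathlib

section
/- Every tree that is bipartite with parts X and Y satisfies 1 ≤ (1/(|X||Y|)) ∏_{v} deg(v), i.e., |X| · |Y| ≤ ∏_{v ∈ V} deg(v); equivalently, every tree is Ferrers-good. -/
/-!
Both sides of the bipartition have degree sum |E| = |X| + |Y| - 1. Since all degrees of a
tree on at least two vertices are positive, a product of positive integers is at least their sum
minus their number plus one, so ∏_{v ∈ X} deg v ≥ |Y| and ∏_{v ∈ Y} deg v ≥ |X|.
-/

noncomputable section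
open scoped Classical

def spanningTreeCount {V : Type*} (G : SimpleGraph V) : ℕ :=
  {H : G.Subgraph | H.IsSpanning ∧ H.coe.IsTree}.ncard

def sdeg {V : Type*} (G : SimpleGraph V) (v : V) : ℕ := (G.neighborSet v).ncard

def IsBipartitionOn {V : Type*} (G : SimpleGraph V) (X Y : Set V) : Prop :=
  Disjoint X Y ∧ X ∪ Y = Set.univ ∧
    ∀ u v, G.Adj u v → (u ∈ X ∧ v ∈ Y) ∨ (u ∈ Y ∧ v ∈ X)

def FerrersGood {V : Type*} [Fintype V] (G : SimpleGraph V) (X Y : Set V) : Prop :=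
  (spanningTreeCount G : ℚ) ≤
    (∏ v : V, (sdeg G v : ℚ)) / ((X.ncard : ℚ) * (Y.ncard : ℚ))

open Finset

theorem Finset.sum_add_one_le_prod_add_card {ι : Type*} (s : Finset ι) (f : ι → ℕ)
    (hf : ∀ i ∈ s, 1 ≤ f i) : ∑ i ∈ s, f i + 1 ≤ ∏ i ∈ s, f i + #s := by
  induction s using Finset.induction_on with
  | empty => simp
  | @insert a s ha ih =>
    rw [sum_insert ha, prod_insert ha, card_insert_of_notMem ha]
    have hfa : 1 ≤ f a := hf a (mem_insert_self a s)
    have hs : ∀ i ∈ s, 1 ≤ f i := fun i hi => hf i (mem_insert_of_mem hi)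
    have hprod : 1 ≤ ∏ i ∈ s, f i := one_le_prod' hs
    -- `a + P ≤ a * P + 1` is `(a - 1) * (P - 1) ≥ 0`
    nlinarith [ih hs]

namespace SimpleGraph

variable {V : Type*}

theorem sdeg_eq_degree (G : SimpleGraph V) (v : V) [Fintype (G.neighborSet v)] :
    sdeg G v = G.degree v := by
  rw [sdeg, Set.ncard_eq_toFinset_card', Set.toFinset_card, card_neighborSet_eq_degree]

theorem IsTree.card_le_prod_degree {G : SimpleGraph V} [Fintype V] [DecidableRel G.Adj]
    [Nontrivial V] (hG : G.IsTree) {s t : Finset V} (hst : G.IsBipartiteWith s t)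
    (hcover : s ∪ t = univ) :
    #t ≤ ∏ v ∈ s, G.degree v := by
  have hsum : ∑ v ∈ s, G.degree v + 1 = #s + #t := by
    rw [← card_union_of_disjoint (disjoint_coe.mp hst.disjoint), hcover, card_univ,
      ← hG.card_edgeFinset, isBipartiteWith_sum_degrees_eq_card_edges hst]
  have := s.sum_add_one_le_prod_add_card (fun v => G.degree v)
    fun v _ => hG.connected.preconnected.degree_pos_of_nontrivial v
  omega

end SimpleGraph

theorem IsBipartitionOn.isBipartiteWith {V : Type*} {G : SimpleGraph V} {X Y : Set V}
    (h : IsBipartitionOn G X Y) : G.IsBipartiteWith X Y :=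
  ⟨h.1, fun u v huv => h.2.2 u v huv⟩

theorem stmt3 {V : Type*} [Fintype V] (G : SimpleGraph V) (hT : G.IsTree)
    (X Y : Set V) (hbip : IsBipartitionOn G X Y) :
    X.ncard * Y.ncard ≤ ∏ v : V, sdeg G v := by
  rcases X.eq_empty_or_nonempty with rfl | ⟨x, hx⟩
  · simp
  rcases Y.eq_empty_or_nonempty with rfl | ⟨y, hy⟩
  · simp
  have : Nontrivial V := ⟨x, y, hbip.1.ne_of_mem hx hy⟩
  have hB : G.IsBipartiteWith X.toFinset Y.toFinset := by
    simpa using hbip.isBipartiteWith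
  have hcover : X.toFinset ∪ Y.toFinset = univ := by
    simpa [← Set.toFinset_union] using hbip.2.1
  rw [Set.ncard_eq_toFinset_card', Set.ncard_eq_toFinset_card', mul_comm]
  calc #Y.toFinset * #X.toFinset
      ≤ (∏ v ∈ X.toFinset, G.degree v) * ∏ v ∈ Y.toFinset, G.degree v :=
        Nat.mul_le_mul (hT.card_le_prod_degree hB hcover)
          (hT.card_le_prod_degree hB.symm (by rwa [union_comm]))
    _ = ∏ v, sdeg G v := by
        simp only [G.sdeg_eq_degree, ← prod_union (Set.disjoint_toFinset.mpr hbip.1), hcover]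
end
end

section
/- Let G₁ and G₂ be disjoint bipartite graphs with bipartitions X₁ ⊔ Y₁ and X₂ ⊔ Y₂, each Ferrers-good, and let G be formed by identifying a vertex x₁ ∈ X₁ with a vertex x₂ ∈ X₂. Then G is Ferrers-good. -/
noncomputable section
open scoped Classical

/-! Restricting a spanning tree of `G` to either side, with the other side contracted onto `x`,
gives a spanning tree of that side, and a spanning tree of `G` is determined by its two
restrictions; hence `T(G) ≤ T(G₁) T(G₂)`. Write `aᵢ = |Xᵢ|`, `bᵢ = |Yᵢ|`, `dᵢ = deg_{Gᵢ} x`.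
Gluing changes only the degree of `x`, to `d₁ + d₂`, and `|X| = a₁ + a₂ - 1`, `|Y| = b₁ + b₂`.
So `F(G₁) F(G₂) ≤ F(G)` reduces to `d₁ d₂ (a₁ + a₂ - 1) (b₁ + b₂) ≤ (d₁ + d₂) a₁ a₂ b₁ b₂`,
which follows from `a₁ + a₂ - 1 ≤ a₁ a₂` and from `dᵢ ≤ bᵢ`, as all neighbours of `x ∈ Xᵢ`
lie in `Yᵢ`. -/

theorem IsBipartitionOn.sdeg_le_ncard {V : Type*} [Finite V] {G : SimpleGraph V} {X Y : Set V}
    (hb : IsBipartitionOn G X Y) {v : V} (hv : v ∈ X) : sdeg G v ≤ Y.ncard := by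
  refine Set.ncard_le_ncard fun u hu => ?_
  rcases hb.2.2 v u hu with ⟨-, huY⟩ | ⟨hvY, -⟩
  · exact huY
  · exact absurd hvY (Set.disjoint_left.mp hb.1 hv)

namespace SimpleGraph

variable {V W : Type*}

theorem Reachable.map_of_adj_or_eq {G : SimpleGraph V} {G' : SimpleGraph W} (f : V → W)
    (hf : ∀ ⦃u v⦄, G.Adj u v → f u = f v ∨ G'.Adj (f u) (f v)) {u v : V}
    (h : G.Reachable u v) : G'.Reachable (f u) (f v) := by
  obtain ⟨p⟩ := h
  induction p with
  | nil => rfl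
  | cons hadj _ ih =>
    rcases hf hadj with heq | hadj'
    · exact heq ▸ ih
    · exact hadj'.reachable.trans ih

theorem spanningTreeCount_eq_ncard (G : SimpleGraph V) :
    spanningTreeCount G = {T : SimpleGraph V | T ≤ G ∧ T.IsTree}.ncard := by
  have himage : Subgraph.spanningCoe '' {T : G.Subgraph | T.IsSpanning ∧ T.coe.IsTree} =
      {T : SimpleGraph V | T ≤ G ∧ T.IsTree} := by
    ext T
    constructor
    · rintro ⟨T, ⟨hspan, htree⟩, rfl⟩
      exact ⟨T.spanningCoe_le, (T.spanningCoeEquivCoeOfSpanning hspan).isTree_iff.mpr htree⟩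
    · rintro ⟨hle, htree⟩
      have hspan := toSubgraph.isSpanning T hle
      exact ⟨toSubgraph T hle,
        ⟨hspan, ((toSubgraph T hle).spanningCoeEquivCoeOfSpanning hspan).isTree_iff.mp htree⟩, rfl⟩
  rw [spanningTreeCount, ← himage, Set.InjOn.ncard_image]
  rintro T ⟨hT, -⟩ T' ⟨hT', -⟩ h
  exact Subgraph.ext (hT.verts_eq_univ.trans hT'.verts_eq_univ.symm) (Subgraph.spanningCoe_inj.mp h)

namespace Subgraph

variable {G : SimpleGraph V}

theorem sdeg_coe (H : G.Subgraph) (v : H.verts) : sdeg H.coe v = (H.neighborSet v).ncard := by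
  rw [sdeg, ← Nat.card_coe_set_eq, ← Nat.card_coe_set_eq]
  exact Nat.card_congr (H.coeNeighborSetEquiv v)

structure IsGluingAt (H K : G.Subgraph) (x : V) : Prop where
  sup_eq_top : H ⊔ K = ⊤
  inter_verts_eq : H.verts ∩ K.verts = {x}

namespace IsGluingAt

variable {H K : G.Subgraph} {x u v : V}

theorem symm (h : H.IsGluingAt K x) : K.IsGluingAt H x :=
  ⟨sup_comm H K ▸ h.sup_eq_top, Set.inter_comm H.verts K.verts ▸ h.inter_verts_eq⟩

theorem mem_left (h : H.IsGluingAt K x) : x ∈ H.verts :=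
  (h.inter_verts_eq.symm.subset rfl).1

theorem eq_of_mem (h : H.IsGluingAt K x) (hH : v ∈ H.verts) (hK : v ∈ K.verts) : v = x :=
  h.inter_verts_eq.subset ⟨hH, hK⟩

theorem adj (h : H.IsGluingAt K x) (huv : G.Adj u v) : H.Adj u v ∨ K.Adj u v := by
  rw [← Subgraph.sup_adj, h.sup_eq_top]
  exact huv

theorem adj_left (h : H.IsGluingAt K x) (hu : u ∈ H.verts) (hv : v ∈ H.verts)
    (huv : G.Adj u v) : H.Adj u v := by
  refine (h.adj huv).resolve_right fun hK => huv.ne ?_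
  rw [h.eq_of_mem hu hK.fst_mem, h.eq_of_mem hv hK.snd_mem]

theorem neighborSet_eq_left (h : H.IsGluingAt K x) (hv : v ∈ H.verts) (hvx : v ≠ x) :
    G.neighborSet v = H.neighborSet v := by
  ext u
  refine ⟨fun huv => (h.adj huv).resolve_right fun hK => hvx ?_, fun huv => huv.adj_sub⟩
  exact h.eq_of_mem hv hK.fst_mem

theorem sdeg_self [Finite V] (h : H.IsGluingAt K x) :
    sdeg G x = (H.neighborSet x).ncard + (K.neighborSet x).ncard := by
  have hunion : G.neighborSet x = H.neighborSet x ∪ K.neighborSet x := by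
    ext u
    exact ⟨h.adj, by rintro (huv | huv) <;> exact huv.adj_sub⟩
  have hdisj : Disjoint (H.neighborSet x) (K.neighborSet x) :=
    Set.disjoint_left.mpr fun u hH hK => hH.ne (h.eq_of_mem hH.snd_mem hK.snd_mem).symm
  rw [sdeg, hunion, Set.ncard_union_eq hdisj]

theorem induce_left_le (h : H.IsGluingAt K x) {T : SimpleGraph V} (hTG : T ≤ G) :
    T.induce H.verts ≤ H.coe :=
  fun u v huv => h.adj_left u.2 v.2 (hTG huv)

theorem isTree_induce_left (h : H.IsGluingAt K x) {T : SimpleGraph V} (hTG : T ≤ G)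
    (hT : T.IsTree) : (T.induce H.verts).IsTree := by
  -- retract `V` onto `H` by sending `K \ H` to `x`: edges of `T` inside `K` collapse to `x`
  let r : V → H.verts := fun w => if hw : w ∈ H.verts then ⟨w, hw⟩ else ⟨x, h.mem_left⟩
  have hr_left : ∀ w : H.verts, r w = w := fun w => dif_pos w.2
  have hr_right : ∀ {w}, w ∈ K.verts → r w = ⟨x, h.mem_left⟩ := fun {w} hw => by
    by_cases hwH : w ∈ H.verts
    · exact (dif_pos hwH).trans (Subtype.ext (h.eq_of_mem hwH hw))
    · exact dif_neg hwH
  have hr : ∀ ⦃a b⦄, T.Adj a b → r a = r b ∨ (T.induce H.verts).Adj (r a) (r b) := by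
    intro a b hab
    rcases h.adj (hTG hab) with hH | hK
    · right
      have ha : r a = ⟨a, hH.fst_mem⟩ := hr_left ⟨a, hH.fst_mem⟩
      have hb : r b = ⟨b, hH.snd_mem⟩ := hr_left ⟨b, hH.snd_mem⟩
      rw [ha, hb]
      exact hab
    · left
      rw [hr_right hK.fst_mem, hr_right hK.snd_mem]
  have : Nonempty H.verts := ⟨⟨x, h.mem_left⟩⟩
  refine ⟨⟨fun u v => ?_⟩, hT.isAcyclic.induce _⟩
  simpa only [hr_left] using (hT.connected.preconnected u v).map_of_adj_or_eq r hr

theorem eq_of_induce_eq (h : H.IsGluingAt K x) {T T' : SimpleGraph V} (hT : T ≤ G)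
    (hT' : T' ≤ G) (hH : T.induce H.verts = T'.induce H.verts)
    (hK : T.induce K.verts = T'.induce K.verts) : T = T' := by
  suffices key : ∀ {T T' : SimpleGraph V}, T ≤ G → T.induce H.verts = T'.induce H.verts →
      T.induce K.verts = T'.induce K.verts → T ≤ T' from
    le_antisymm (key hT hH hK) (key hT' hH.symm hK.symm)
  intro T T' hT hH hK a b hab
  rcases h.adj (hT hab) with hHab | hKab
  · exact (congrArg (·.Adj ⟨a, hHab.fst_mem⟩ ⟨b, hHab.snd_mem⟩) hH).mp hab
  · exact (congrArg (·.Adj ⟨a, hKab.fst_mem⟩ ⟨b, hKab.snd_mem⟩) hK).mp hab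

theorem spanningTreeCount_le [Finite V] (h : H.IsGluingAt K x) :
    spanningTreeCount G ≤ spanningTreeCount H.coe * spanningTreeCount K.coe := by
  simp only [spanningTreeCount_eq_ncard, ← Set.ncard_prod]
  refine Set.ncard_le_ncard_of_injOn (fun T => (T.induce H.verts, T.induce K.verts))
    (fun T ⟨hTG, hT⟩ => ⟨⟨h.induce_left_le hTG, h.isTree_induce_left hTG hT⟩,
      ⟨h.symm.induce_left_le hTG, h.symm.isTree_induce_left hTG hT⟩⟩) ?_ (Set.toFinite _)
  intro T hT T' hT' hTT'
  exact h.eq_of_induce_eq hT.1 hT'.1 (congrArg Prod.fst hTT') (congrArg Prod.snd hTT')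

theorem verts_union (h : H.IsGluingAt K x) : H.verts ∪ K.verts = Set.univ := by
  rw [← Subgraph.verts_sup, h.sup_eq_top, Subgraph.verts_top]

theorem prod_eq_mul_prod_erase_mul_prod_erase [Fintype V] {M : Type*} [CommMonoid M]
    (h : H.IsGluingAt K x) (f : V → M) :
    ∏ v, f v = f x * ((∏ v ∈ H.verts.toFinset.erase x, f v) *
      ∏ v ∈ K.verts.toFinset.erase x, f v) := by
  have hdisj : Disjoint (H.verts.toFinset.erase x) (K.verts.toFinset.erase x) := by
    simp only [Finset.disjoint_left, Finset.mem_erase, Set.mem_toFinset]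
    exact fun v ⟨hvx, hvH⟩ ⟨_, hvK⟩ => hvx (h.eq_of_mem hvH hvK)
  have hunion : Finset.univ.erase x = H.verts.toFinset.erase x ∪ K.verts.toFinset.erase x := by
    ext v
    have hv : v ∈ H.verts ∪ K.verts := h.verts_union ▸ Set.mem_univ v
    simp only [Finset.mem_erase, Finset.mem_union, Set.mem_toFinset, Finset.mem_univ,
      and_true, ← and_or_left]
    exact (and_iff_left hv).symm
  rw [← Finset.mul_prod_erase _ _ (Finset.mem_univ x), hunion, Finset.prod_union hdisj]

theorem prod_sdeg_coe_left [Fintype V] (h : H.IsGluingAt K x) :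
    ∏ v : H.verts, (sdeg H.coe v : ℚ) =
      (H.neighborSet x).ncard * ∏ v ∈ H.verts.toFinset.erase x, (sdeg G v : ℚ) := by
  simp only [sdeg_coe]
  rw [Finset.prod_set_coe (f := fun v => ((H.neighborSet v).ncard : ℚ)),
    ← Finset.mul_prod_erase _ _ (Set.mem_toFinset.mpr h.mem_left)]
  congr 1
  refine Finset.prod_congr rfl fun v hv => ?_
  rw [Finset.mem_erase, Set.mem_toFinset] at hv
  rw [sdeg, h.neighborSet_eq_left hv.2 hv.1]

theorem ncard_image_val_union_add_one [Finite V] (h : H.IsGluingAt K x) {S₁ : Set H.verts}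
    {S₂ : Set K.verts} (h₁ : ⟨x, h.mem_left⟩ ∈ S₁) (h₂ : ⟨x, h.symm.mem_left⟩ ∈ S₂) :
    (Subtype.val '' S₁ ∪ Subtype.val '' S₂).ncard + 1 = S₁.ncard + S₂.ncard := by
  have hinter : Subtype.val '' S₁ ∩ Subtype.val '' S₂ = {x} := by
    refine Set.eq_singleton_iff_unique_mem.mpr ⟨⟨⟨_, h₁, rfl⟩, ⟨_, h₂, rfl⟩⟩, ?_⟩
    rintro _ ⟨⟨w, -, rfl⟩, ⟨w', -, hw'⟩⟩
    exact h.eq_of_mem w.2 (hw' ▸ w'.2)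
  rw [← Set.ncard_image_of_injective S₁ Subtype.val_injective,
    ← Set.ncard_image_of_injective S₂ Subtype.val_injective,
    ← Set.ncard_union_add_ncard_inter, hinter, Set.ncard_singleton]

theorem ncard_image_val_union [Finite V] (h : H.IsGluingAt K x) {S₁ : Set H.verts}
    {S₂ : Set K.verts} (h₁ : ⟨x, h.mem_left⟩ ∉ S₁) :
    (Subtype.val '' S₁ ∪ Subtype.val '' S₂).ncard = S₁.ncard + S₂.ncard := by
  have hdisj : Disjoint (Subtype.val '' S₁) (Subtype.val '' S₂) := by
    refine Set.disjoint_left.mpr ?_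
    rintro _ ⟨w, hw, rfl⟩ ⟨w', -, hw'⟩
    have hwx : w = ⟨x, h.mem_left⟩ := Subtype.ext (h.eq_of_mem w.2 (hw' ▸ w'.2))
    exact h₁ (hwx ▸ hw)
  rw [Set.ncard_union_eq hdisj, Set.ncard_image_of_injective S₁ Subtype.val_injective,
    Set.ncard_image_of_injective S₂ Subtype.val_injective]

end IsGluingAt

end Subgraph

end SimpleGraph

theorem div_mul_div_le_add_div_mul_add {K : Type*} [Field K] [LinearOrder K]
    [IsStrictOrderedRing K] {a₁ a₂ b₁ b₂ d₁ d₂ : K} (ha₁ : 1 ≤ a₁) (ha₂ : 1 ≤ a₂)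
    (hd₁ : 0 ≤ d₁) (hd₂ : 0 ≤ d₂) (hdb₁ : d₁ ≤ b₁) (hdb₂ : d₂ ≤ b₂) :
    d₁ / (a₁ * b₁) * (d₂ / (a₂ * b₂)) ≤ (d₁ + d₂) / ((a₁ + a₂ - 1) * (b₁ + b₂)) := by
  have hrhs : 0 ≤ (d₁ + d₂) / ((a₁ + a₂ - 1) * (b₁ + b₂)) :=
    div_nonneg (by linarith) (mul_nonneg (by linarith) (by linarith))
  rcases (hd₁.trans hdb₁).eq_or_lt with hb₁ | hb₁
  · obtain rfl : d₁ = 0 := le_antisymm (hb₁ ▸ hdb₁) hd₁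
    rw [zero_div, zero_mul]
    exact hrhs
  rcases (hd₂.trans hdb₂).eq_or_lt with hb₂ | hb₂
  · obtain rfl : d₂ = 0 := le_antisymm (hb₂ ▸ hdb₂) hd₂
    rw [zero_div, mul_zero]
    exact hrhs
  have ha : a₁ + a₂ - 1 ≤ a₁ * a₂ := by nlinarith [mul_nonneg (sub_nonneg.2 ha₁) (sub_nonneg.2 ha₂)]
  have hb : d₁ * d₂ * (b₁ + b₂) ≤ (d₁ + d₂) * (b₁ * b₂) := by
    nlinarith [mul_nonneg (mul_nonneg hd₁ hb₁.le) (sub_nonneg.2 hdb₂),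
      mul_nonneg (mul_nonneg hd₂ hb₂.le) (sub_nonneg.2 hdb₁)]
  rw [div_mul_div_comm, div_le_div_iff₀ (by positivity) (by nlinarith)]
  calc d₁ * d₂ * ((a₁ + a₂ - 1) * (b₁ + b₂)) = (a₁ + a₂ - 1) * (d₁ * d₂ * (b₁ + b₂)) := by ring
    _ ≤ (a₁ * a₂) * ((d₁ + d₂) * (b₁ * b₂)) :=
        mul_le_mul ha hb (by positivity) (by positivity)
    _ = (d₁ + d₂) * (a₁ * b₁ * (a₂ * b₂)) := by ring

theorem stmt4 {V : Type*} [Fintype V] (G : SimpleGraph V) (H₁ H₂ : G.Subgraph)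
    (hcover : H₁ ⊔ H₂ = ⊤) (x : V) (hmeet : H₁.verts ∩ H₂.verts = {x})
    (hx₁ : x ∈ H₁.verts) (hx₂ : x ∈ H₂.verts)
    (X₁ Y₁ : Set ↥H₁.verts) (X₂ Y₂ : Set ↥H₂.verts)
    (hb₁ : IsBipartitionOn H₁.coe X₁ Y₁) (hb₂ : IsBipartitionOn H₂.coe X₂ Y₂)
    (hxX₁ : (⟨x, hx₁⟩ : ↥H₁.verts) ∈ X₁) (hxX₂ : (⟨x, hx₂⟩ : ↥H₂.verts) ∈ X₂)
    (hg₁ : FerrersGood H₁.coe X₁ Y₁) (hg₂ : FerrersGood H₂.coe X₂ Y₂) :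
    FerrersGood G ((Subtype.val '' X₁) ∪ (Subtype.val '' X₂))
      ((Subtype.val '' Y₁) ∪ (Subtype.val '' Y₂)) := by
  have h : H₁.IsGluingAt H₂ x := ⟨hcover, hmeet⟩
  have hd₁ : (H₁.neighborSet x).ncard ≤ Y₁.ncard :=
    SimpleGraph.Subgraph.sdeg_coe H₁ ⟨x, hx₁⟩ ▸ hb₁.sdeg_le_ncard hxX₁
  have hd₂ : (H₂.neighborSet x).ncard ≤ Y₂.ncard :=
    SimpleGraph.Subgraph.sdeg_coe H₂ ⟨x, hx₂⟩ ▸ hb₂.sdeg_le_ncard hxX₂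
  have ha₁ : 0 < X₁.ncard := (Set.ncard_pos).mpr ⟨_, hxX₁⟩
  have ha₂ : 0 < X₂.ncard := (Set.ncard_pos).mpr ⟨_, hxX₂⟩
  have hX : (((Subtype.val '' X₁) ∪ (Subtype.val '' X₂)).ncard : ℚ) = X₁.ncard + X₂.ncard - 1 :=
    eq_sub_of_add_eq (by exact_mod_cast h.ncard_image_val_union_add_one hxX₁ hxX₂)
  have hY : (((Subtype.val '' Y₁) ∪ (Subtype.val '' Y₂)).ncard : ℚ) = Y₁.ncard + Y₂.ncard := by
    exact_mod_cast h.ncard_image_val_union fun hxY₁ => Set.disjoint_left.mp hb₁.1 hxX₁ hxY₁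
  unfold FerrersGood at hg₁ hg₂ ⊢
  rw [h.prod_sdeg_coe_left] at hg₁
  rw [h.symm.prod_sdeg_coe_left] at hg₂
  rw [h.prod_eq_mul_prod_erase_mul_prod_erase, h.sdeg_self, hX, hY]
  set R₁ := ∏ v ∈ H₁.verts.toFinset.erase x, (sdeg G v : ℚ)
  set R₂ := ∏ v ∈ H₂.verts.toFinset.erase x, (sdeg G v : ℚ)
  set d₁ := ((H₁.neighborSet x).ncard : ℚ)
  set d₂ := ((H₂.neighborSet x).ncard : ℚ)
  calc (spanningTreeCount G : ℚ) ≤ spanningTreeCount H₁.coe * spanningTreeCount H₂.coe := by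
        exact_mod_cast h.spanningTreeCount_le
    _ ≤ d₁ * R₁ / (X₁.ncard * Y₁.ncard) * (d₂ * R₂ / (X₂.ncard * Y₂.ncard)) :=
        mul_le_mul hg₁ hg₂ (by positivity) (by positivity)
    _ = R₁ * R₂ * (d₁ / (X₁.ncard * Y₁.ncard) * (d₂ / (X₂.ncard * Y₂.ncard))) := by ring
    _ ≤ R₁ * R₂ * ((d₁ + d₂) / ((X₁.ncard + X₂.ncard - 1) * (Y₁.ncard + Y₂.ncard))) := by
        gcongr
        exact div_mul_div_le_add_div_mul_add (by exact_mod_cast ha₁) (by exact_mod_cast ha₂)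
          (by positivity) (by positivity) (Nat.cast_le.mpr hd₁) (Nat.cast_le.mpr hd₂)
    _ = _ := by push_cast; ring
end
end

section
/- Let p₁, q₁, p₂, q₂ be positive integers and let d₁, d₂ be positive integers with d₁ ≤ q₁ and d₂ ≤ q₂. Then (d₁/(p₁q₁)) · (d₂/(p₂q₂)) ≤ (d₁ + d₂)/((p₁ + p₂ - 1)(q₁ + q₂)). -/
theorem stmt5 (p₁ q₁ p₂ q₂ d₁ d₂ : ℕ)
    (hp₁ : 0 < p₁) (hq₁ : 0 < q₁) (hp₂ : 0 < p₂) (hq₂ : 0 < q₂)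
    (hd₁ : 0 < d₁) (hd₂ : 0 < d₂) (h₁ : d₁ ≤ q₁) (h₂ : d₂ ≤ q₂) :
    ((d₁ : ℚ) / (p₁ * q₁)) * ((d₂ : ℚ) / (p₂ * q₂)) ≤
      ((d₁ : ℚ) + d₂) / (((p₁ : ℚ) + p₂ - 1) * ((q₁ : ℚ) + q₂)) := by
  have hp₁' : (1:ℚ) ≤ p₁ := by exact_mod_cast hp₁
  have hp₂' : (1:ℚ) ≤ p₂ := by exact_mod_cast hp₂
  have hq₁' : (0:ℚ) < q₁ := by exact_mod_cast hq₁
  have hq₂' : (0:ℚ) < q₂ := by exact_mod_cast hq₂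
  have hd₁' : (0:ℚ) < d₁ := by exact_mod_cast hd₁
  have hd₂' : (0:ℚ) < d₂ := by exact_mod_cast hd₂
  have h₁' : (d₁:ℚ) ≤ q₁ := by exact_mod_cast h₁
  have h₂' : (d₂:ℚ) ≤ q₂ := by exact_mod_cast h₂
  rw [div_mul_div_comm, div_le_div_iff₀ (by positivity) (by nlinarith)]
  -- suffices: d₁d₂(p₁+p₂-1)(q₁+q₂) ≤ (d₁+d₂)p₁q₁p₂q₂
  have step1 : (d₁:ℚ) * d₂ * (q₁ + q₂) ≤ (d₁ + d₂) * (q₁ * q₂) := by nlinarith [mul_nonneg (mul_nonneg (sub_nonneg.2 h₂') hd₁'.le) hq₁'.le, mul_nonneg (mul_nonneg (sub_nonneg.2 h₁') hd₂'.le) hq₂'.le]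
  have step2 : ((p₁:ℚ) + p₂ - 1) ≤ p₁ * p₂ := by nlinarith [mul_nonneg (mul_nonneg (sub_nonneg.2 h₂') hd₁'.le) hq₁'.le, mul_nonneg (mul_nonneg (sub_nonneg.2 h₁') hd₂'.le) hq₂'.le]
  have key : (d₁:ℚ) * d₂ * ((p₁ + p₂ - 1) * (q₁ + q₂)) ≤ (p₁ * p₂) * ((d₁ + d₂) * (q₁ * q₂)) := by
    calc (d₁:ℚ) * d₂ * ((p₁ + p₂ - 1) * (q₁ + q₂))
        ≤ (d₁:ℚ) * d₂ * ((p₁ * p₂) * (q₁ + q₂)) := by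
          apply mul_le_mul_of_nonneg_left _ (by positivity)
          apply mul_le_mul_of_nonneg_right step2 (by positivity)
      _ = (p₁ * p₂) * ((d₁:ℚ) * d₂ * (q₁ + q₂)) := by ring
      _ ≤ (p₁ * p₂) * ((d₁ + d₂) * (q₁ * q₂)) := by
          apply mul_le_mul_of_nonneg_left step1 (by positivity)
  linarith [key, (by ring : (p₁:ℚ) * p₂ * ((d₁ + d₂) * (q₁ * q₂)) = ((d₁:ℚ)+d₂) * (p₁ * q₁ * (p₂ * q₂)))]
end

section
/- For a bipartite graph, the degree sequence of one side of the bipartition is the conjugate of the degree sequence of the other side if and only if the neighborhoods of the vertices in one side are linearly ordered by inclusion (i.e., the graph is a Ferrers graph). -/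
noncomputable section
open scoped Classical

def conjugateMultiset (m : Multiset ℕ) : Multiset ℕ :=
  (Multiset.range (m.sup)).map (fun i => (m.filter (fun p => i + 1 ≤ p)).card)


/-!
Write `N x ⊆ Y` and `M y ⊆ X` for the neighbourhoods; the `i`-th part of the conjugate of the
`X`-degrees is `#{x | i < #N x}`.

If the `N x` are nested, then for all `i, k` we have `i < #{y | k < #M y} ↔ k < #{x | i < #N x}`:
the sets `N x` with more than `i` elements have a smallest member, whose elements lie in all of
them, and the `M y` are nested as well, which gives the converse. Counting over `i`, the
`Y`-degrees exceeding `k` are exactly as many as the conjugate parts exceeding `k`.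

Conversely, the sum of the squared `Y`-degrees is `∑_{x,x'} #(N x ∩ N x')`, while the squared
parts of the conjugate sum to `∑_{x,x'} min #(N x) #(N x')`. Equality of the two multisets thus
forces `#(N x ∩ N x') = min #(N x) #(N x')` for every pair, i.e. `N x` and `N x'` are comparable.
-/

open Finset

theorem Multiset.eq_of_countP_lt_eq {s t : Multiset ℕ} (hs : 0 ∉ s) (ht : 0 ∉ t)
    (h : ∀ k, s.countP (k < ·) = t.countP (k < ·)) : s = t := by
  have hsplit : ∀ (u : Multiset ℕ) n,
      u.countP (n < ·) = u.count (n + 1) + u.countP (n + 1 < ·) := by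
    intro u n
    induction u using Multiset.induction with
    | empty => simp
    | cons a u ih =>
      simp only [Multiset.countP_cons, Multiset.count_cons, ih]
      split_ifs <;> omega
  ext n
  cases n with
  | zero => rw [Multiset.count_eq_zero.2 hs, Multiset.count_eq_zero.2 ht]
  | succ n =>
    have := hsplit s n
    have := hsplit t n
    have := h n
    have := h (n + 1)
    omega

theorem Multiset.sum_map_sq_filter_pos (s : Multiset ℕ) :
    ((s.filter (0 < ·)).map (· ^ 2)).sum = (s.map (· ^ 2)).sum := by
  induction s using Multiset.induction with
  | empty => simp
  | cons a s ih =>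
    rcases Nat.eq_zero_or_pos a with rfl | ha <;> simp [*]

theorem Finset.card_filter_sq {ι : Type*} (s : Finset ι) (p : ι → Prop) [DecidablePred p] :
    #{x ∈ s | p x} ^ 2 = ∑ x ∈ s, ∑ x' ∈ s, if p x ∧ p x' then 1 else 0 := by
  rw [card_filter, sq, sum_mul_sum]
  simp only [ite_zero_mul_ite_zero, mul_one]

theorem Finset.subset_or_subset_of_card_inter_eq_min {α : Type*} [DecidableEq α] {s t : Finset α}
    (h : #(s ∩ t) = min #s #t) : s ⊆ t ∨ t ⊆ s := by
  rcases le_total #s #t with hst | hst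
  · exact .inl (inter_eq_left.1 (eq_of_subset_of_card_le inter_subset_left (by omega)))
  · exact .inr (inter_eq_right.1 (eq_of_subset_of_card_le inter_subset_right (by omega)))

theorem conjugateMultiset_map {ι : Type*} (s : Finset ι) (d : ι → ℕ) :
    conjugateMultiset (s.val.map d) = (range (s.sup d)).val.map fun i => #{x ∈ s | i < d x} := by
  rw [conjugateMultiset, ← sup_def, range_val]
  congr 1
  funext i
  rw [← Multiset.countP_eq_card_filter, Multiset.countP_map]
  rfl

theorem zero_notMem_conjugateMultiset_map {ι : Type*} (s : Finset ι) (d : ι → ℕ) :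
    0 ∉ conjugateMultiset (s.val.map d) := by
  rw [conjugateMultiset_map]
  simp only [Multiset.mem_map, mem_val, mem_range, not_exists, not_and]
  intro i hi
  obtain ⟨x, hx, hix⟩ := Finset.lt_sup_iff.1 hi
  exact (card_pos.2 ⟨x, mem_filter.2 ⟨hx, hix⟩⟩).ne'

theorem sum_sq_conjugateMultiset_map {ι : Type*} (s : Finset ι) (d : ι → ℕ) :
    ((conjugateMultiset (s.val.map d)).map (· ^ 2)).sum
      = ∑ x ∈ s, ∑ x' ∈ s, min (d x) (d x') := by
  rw [conjugateMultiset_map, Multiset.map_map, sum_map_val]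
  simp only [Function.comp_apply, card_filter_sq]
  rw [sum_comm]
  refine sum_congr rfl fun x hx => ?_
  rw [sum_comm]
  refine sum_congr rfl fun x' hx' => ?_
  have : d x ≤ s.sup d := le_sup hx
  have : d x' ≤ s.sup d := le_sup hx'
  rw [← card_filter, ← card_range (min (d x) (d x'))]
  congr 1
  ext i
  simp only [mem_filter, mem_range]
  omega

section Relation

variable {X Y : Type*} [Fintype Y] (r : X → Y → Prop)

def nbhd (x : X) : Finset Y := {y | r x y}

variable {r} in
@[simp]
theorem mem_nbhd {x : X} {y : Y} : y ∈ nbhd r x ↔ r x y := by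
  simp [nbhd]

def IsFerrers : Prop := ∀ x x', nbhd r x ⊆ nbhd r x' ∨ nbhd r x' ⊆ nbhd r x

variable {r} in
theorem IsFerrers.exists_nbhd_subset (h : IsFerrers r) {T : Finset X} (hT : T.Nonempty) :
    ∃ x₀ ∈ T, ∀ x ∈ T, nbhd r x₀ ⊆ nbhd r x := by
  obtain ⟨x₀, hx₀, hmin⟩ := T.exists_min_image (fun x => #(nbhd r x)) hT
  exact ⟨x₀, hx₀, fun x hx =>
    (h x₀ x).elim id fun hsub => (eq_of_subset_of_card_le hsub (hmin x hx)).superset⟩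

variable [Fintype X]

def degrees : Multiset ℕ := univ.val.map fun x => #(nbhd r x)

theorem sum_sq_card_nbhd_swap :
    ∑ y, #(nbhd (Function.swap r) y) ^ 2 = ∑ x, ∑ x', #(nbhd r x ∩ nbhd r x') := by
  simp only [nbhd, card_filter_sq, Function.swap]
  rw [sum_comm]
  refine sum_congr rfl fun x _ => ?_
  rw [sum_comm]
  simp_rw [← filter_and, card_filter]

variable {r}

theorem IsFerrers.swap (h : IsFerrers r) : IsFerrers (Function.swap r) := by
  intro y y'
  by_contra! hc
  obtain ⟨x, hxy, hxy'⟩ := not_subset.1 hc.1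
  obtain ⟨x', hx'y', hx'y⟩ := not_subset.1 hc.2
  simp only [mem_nbhd, Function.swap] at hxy hxy' hx'y' hx'y
  rcases h x x' with hsub | hsub
  · exact hx'y (mem_nbhd.1 (hsub (mem_nbhd.2 hxy)))
  · exact hxy' (mem_nbhd.1 (hsub (mem_nbhd.2 hx'y')))

theorem IsFerrers.lt_card_of_lt_card (h : IsFerrers r) {i k : ℕ}
    (hk : k < #{x | i < #(nbhd r x)}) : i < #{y | k < #(nbhd (Function.swap r) y)} := by
  obtain ⟨x₀, hx₀, hsub⟩ :=
    h.exists_nbhd_subset (T := {x | i < #(nbhd r x)}) (card_pos.1 (by omega))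
  calc i < #(nbhd r x₀) := (mem_filter.1 hx₀).2
    _ ≤ #{y | k < #(nbhd (Function.swap r) y)} := card_le_card fun y hy => ?_
  have : ({x | i < #(nbhd r x)} : Finset X) ⊆ nbhd (Function.swap r) y := fun x hx =>
    mem_nbhd.2 (mem_nbhd.1 (hsub x hx hy) :)
  simpa using hk.trans_le (card_le_card this)

theorem IsFerrers.lt_card_iff (h : IsFerrers r) {i k : ℕ} :
    i < #{y | k < #(nbhd (Function.swap r) y)} ↔ k < #{x | i < #(nbhd r x)} :=
  ⟨h.swap.lt_card_of_lt_card, h.lt_card_of_lt_card⟩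

theorem IsFerrers.degrees_swap_filter_pos (h : IsFerrers r) :
    (degrees (Function.swap r)).filter (0 < ·) = conjugateMultiset (degrees r) := by
  refine Multiset.eq_of_countP_lt_eq (by simp) (zero_notMem_conjugateMultiset_map _ _) fun k => ?_
  set n := univ.sup fun x => #(nbhd r x)
  set c := #{y | k < #(nbhd (Function.swap r) y)}
  have hcn : c ≤ n := by
    by_contra! hnc
    have hempty : #{x | n < #(nbhd r x)} = 0 :=
      card_eq_zero.2 <| filter_eq_empty_iff.2 fun x _ =>
        not_lt.2 (le_sup (f := fun x => #(nbhd r x)) (mem_univ x))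
    have := h.lt_card_iff.1 hnc
    omega
  calc ((degrees (Function.swap r)).filter (0 < ·)).countP (k < ·) = c := by
        rw [Multiset.countP_filter, degrees, Multiset.countP_map]
        exact congrArg card (filter_congr fun y _ => and_iff_left_of_imp fun hk => by omega)
    _ = #{i ∈ range n | i < c} := by
        have : ({i ∈ range n | i < c} : Finset ℕ) = range c := by
          ext i
          simp only [mem_filter, mem_range]
          omega
        rw [this, card_range]
    _ = #{i ∈ range n | k < #{x | i < #(nbhd r x)}} :=
        congrArg card (filter_congr fun i _ => h.lt_card_iff)
    _ = (conjugateMultiset (degrees r)).countP (k < ·) := by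
        rw [degrees, conjugateMultiset_map, Multiset.countP_map]
        rfl

theorem isFerrers_of_degrees_swap_filter_pos
    (h : (degrees (Function.swap r)).filter (0 < ·) = conjugateMultiset (degrees r)) :
    IsFerrers r := by
  have hsum : ∑ x, ∑ x', #(nbhd r x ∩ nbhd r x') = ∑ x, ∑ x', min #(nbhd r x) #(nbhd r x') := by
    rw [← sum_sq_card_nbhd_swap, ← sum_sq_conjugateMultiset_map, ← degrees, ← h,
      Multiset.sum_map_sq_filter_pos, degrees, Multiset.map_map, sum_map_val]
    rfl
  have hle : ∀ x x', #(nbhd r x ∩ nbhd r x') ≤ min #(nbhd r x) #(nbhd r x') := fun x x' =>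
    le_min (card_le_card inter_subset_left) (card_le_card inter_subset_right)
  intro x x'
  refine subset_or_subset_of_card_inter_eq_min ?_
  have hrow :=
    (sum_eq_sum_iff_of_le fun x _ => sum_le_sum fun x' _ => hle x x').1 hsum x (mem_univ x)
  exact (sum_eq_sum_iff_of_le fun x' _ => hle x x').1 hrow x' (mem_univ x')

end Relation

section Bipartite
variable {X Y : Type*} {G : SimpleGraph (X ⊕ Y)}

def crossAdj (G : SimpleGraph (X ⊕ Y)) (x : X) (y : Y) : Prop := G.Adj (.inl x) (.inr y)

theorem neighborSet_inl [Fintype Y] (hX : ∀ x x', ¬G.Adj (.inl x) (.inl x')) (x : X) :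
    G.neighborSet (.inl x) = .inr '' ↑(nbhd (crossAdj G) x) := by
  ext (x' | y) <;> simp [crossAdj, hX]

theorem neighborSet_inr [Fintype X] (hY : ∀ y y', ¬G.Adj (.inr y) (.inr y')) (y : Y) :
    G.neighborSet (.inr y) = .inl '' ↑(nbhd (Function.swap (crossAdj G)) y) := by
  ext (x | y') <;> simp [crossAdj, hY, G.adj_comm]

theorem sdeg_inl [Fintype Y] (hX : ∀ x x', ¬G.Adj (.inl x) (.inl x')) (x : X) :
    sdeg G (.inl x) = #(nbhd (crossAdj G) x) := by
  rw [sdeg, neighborSet_inl hX, Set.ncard_image_of_injective _ Sum.inr_injective,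
    Set.ncard_coe_finset]

theorem sdeg_inr [Fintype X] (hY : ∀ y y', ¬G.Adj (.inr y) (.inr y')) (y : Y) :
    sdeg G (.inr y) = #(nbhd (Function.swap (crossAdj G)) y) := by
  rw [sdeg, neighborSet_inr hY, Set.ncard_image_of_injective _ Sum.inl_injective,
    Set.ncard_coe_finset]

end Bipartite

theorem stmt12 {X Y : Type*} [Fintype X] [Fintype Y] (G : SimpleGraph (X ⊕ Y))
    (hbip : ∀ u v : X ⊕ Y, G.Adj u v →
      (∃ x y, u = Sum.inl x ∧ v = Sum.inr y) ∨ (∃ x y, u = Sum.inr y ∧ v = Sum.inl x)) :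
    (((Finset.univ.val.map (fun y : Y => sdeg G (Sum.inr y))).filter (fun d => 0 < d)) =
        conjugateMultiset (Finset.univ.val.map (fun x : X => sdeg G (Sum.inl x)))) ↔
      (∀ x x' : X, G.neighborSet (Sum.inl x) ⊆ G.neighborSet (Sum.inl x') ∨
        G.neighborSet (Sum.inl x') ⊆ G.neighborSet (Sum.inl x)) := by
  have hX : ∀ x x', ¬G.Adj (.inl x) (.inl x') := fun x x' hadj => by
    rcases hbip _ _ hadj with ⟨_, _, _, h⟩ | ⟨_, _, h, _⟩ <;> simp at h
  have hY : ∀ y y', ¬G.Adj (.inr y) (.inr y') := fun y y' hadj => by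
    rcases hbip _ _ hadj with ⟨_, _, h, _⟩ | ⟨_, _, _, h⟩ <;> simp at h
  have hdegX : univ.val.map (fun x => sdeg G (.inl x)) = degrees (crossAdj G) := by
    simp only [degrees, sdeg_inl hX]
  have hdegY :
      univ.val.map (fun y => sdeg G (.inr y)) = degrees (Function.swap (crossAdj G)) := by
    simp only [degrees, sdeg_inr hY]
  simp only [neighborSet_inl hX, Set.image_subset_image_iff Sum.inr_injective, coe_subset]
  rw [hdegX, hdegY]
  exact ⟨isFerrers_of_degrees_swap_filter_pos, IsFerrers.degrees_swap_filter_pos⟩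
end
end

section
/- If the neighborhoods of the vertices of X in a bipartite graph G are linearly ordered by inclusion, then so are the neighborhoods of the vertices of Y. -/
theorem stmt14 {X Y : Type*} (G : SimpleGraph (X ⊕ Y))
    (hbip : ∀ u v : X ⊕ Y, G.Adj u v →
      (∃ x y, u = Sum.inl x ∧ v = Sum.inr y) ∨ (∃ x y, u = Sum.inr y ∧ v = Sum.inl x))
    (hX : ∀ x x' : X, G.neighborSet (Sum.inl x) ⊆ G.neighborSet (Sum.inl x') ∨
      G.neighborSet (Sum.inl x') ⊆ G.neighborSet (Sum.inl x)) :
    ∀ y y' : Y, G.neighborSet (Sum.inr y) ⊆ G.neighborSet (Sum.inr y') ∨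
      G.neighborSet (Sum.inr y') ⊆ G.neighborSet (Sum.inr y) := by
  intro y y'
  by_contra h
  push_neg at h
  rw [Set.not_subset, Set.not_subset] at h
  obtain ⟨⟨u, hu, hu'⟩, ⟨v, hv, hv'⟩⟩ := h
  -- u and v are inl
  obtain ⟨x, hx⟩ : ∃ x, u = Sum.inl x := by
    rcases hbip _ _ hu.symm with ⟨a, b, h1, h2⟩ | ⟨a, b, h1, h2⟩
    · exact ⟨a, h1⟩
    · exact absurd h2 (by simp)
  obtain ⟨x', hx'⟩ : ∃ x', v = Sum.inl x' := by
    rcases hbip _ _ hv.symm with ⟨a, b, h1, h2⟩ | ⟨a, b, h1, h2⟩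
    · exact ⟨a, h1⟩
    · exact absurd h2 (by simp)
  subst hx hx'
  have hxy : Sum.inr y ∈ G.neighborSet (Sum.inl x) := hu.symm
  have hxy' : Sum.inr y' ∉ G.neighborSet (Sum.inl x) := fun h => hu' h.symm
  have hx'y' : Sum.inr y' ∈ G.neighborSet (Sum.inl x') := hv.symm
  have hx'y : Sum.inr y ∉ G.neighborSet (Sum.inl x') := fun h => hv' h.symm
  rcases hX x x' with hs | hs
  · exact hx'y (hs hxy)
  · exact hxy' (hs hx'y')
end
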